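/- Let n be a positive even integer. Then the following two statements are equivalent: (i) for every j > 0, the orbit of the sequence 1^{2j-1} under the map t ↦ C_{1,n}(1, t) on {1, n}^{2j-1} has length 2^j; (ii) for every j > 0, the sequence E_{1,n}(1^{2^j}, 1^{2j}) has odd length. -/

import Mathlib

/-!
`C(s, ·)` is compatible with concatenation: `C(s ++ s', t) = C(s', C(s, t))` and
`E(s ++ s', t) = E(s, t) ++ E(s', C(s, t))`, because expanding `s ++ s'` from a letter `x` expands
`s'` from the letter that would follow the last run of the expansion of `s`, and `C(s, t)` records
exactly these letters. Hence the `q`-th iterate of `C(m, ·)` is `C(m^q, ·)`. If `t` is fixed by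
`C(s, ·)`, then `t ++ [x]` is fixed iff `E(s, t)` has even length. For a fixed `t` of `C(s, ·)`,
both `E(s ++ s, t)` and `E(s ++ s, t ++ [x])` have even length (the last letter of `t ++ [x]` does
not affect the length of its expansion), so `t ++ [x, y]` is fixed by `C(s ++ s, ·)`. By induction
`m^{2j}` is fixed by `C(m^{2^j}, ·)`, so `m^{2j+1}` has period `2^{j+1}`, and its minimal period is
`2^{j+1}` rather than a divisor of `2^j` exactly when `E(m^{2^j}, m^{2j})` has odd length.
-/

/-- `expand1 m n x s` : the expansion `E_{m,n}(s, x)` of the finite sequence `s` with the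
single starting point `x ∈ {m, n}`: the unique sequence with values in `{m, n}`, first term
`x`, and run-lengths `s`. -/
def expand1 (m n : ℕ) : ℕ → List ℕ → List ℕ
  | _, [] => []
  | x, a :: l => List.replicate a x ++ expand1 m n (m + n - x) l

/-- `expand m n s t` : the expansion `E_{m,n}(s, t)` of the finite sequence `s` with the
finite sequence of starting points `t` (values in `{m, n}`), defined by
`E_{m,n}(s, t₁ t') = E_{m,n}(E_{m,n}(s, t₁), t')`. -/
def expand (m n : ℕ) : List ℕ → List ℕ → List ℕ
  | s, [] => s
  | s, x :: t => expand m n (expand1 m n x s) t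

/-- `torsion m n s t` : the torsion `C_{m,n}(s, t)`, the sequence of the same length as `t`
whose `k`-th term equals `m + n` minus the last term of `E_{m,n}(s, t⁽ᵏ⁾)`, where `t⁽ᵏ⁾`
consists of the first `k` terms of `t`. -/
def torsion (m n : ℕ) (s t : List ℕ) : List ℕ :=
  (List.range t.length).map fun k => m + n - (expand m n s (t.take (k + 1))).getLastD 0

def IsWord (m n : ℕ) (s : List ℕ) : Prop :=
  s ≠ [] ∧ s ⊆ [m, n]

section

variable {m n : ℕ}

lemma add_sub_mem_pair {x : ℕ} (hx : x ∈ [m, n]) : m + n - x ∈ [m, n] := by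
  simp only [List.mem_cons, List.not_mem_nil, or_false] at hx ⊢
  omega

lemma le_add_of_mem_pair {x : ℕ} (hx : x ∈ [m, n]) : x ≤ m + n := by
  simp only [List.mem_cons, List.not_mem_nil, or_false] at hx
  omega

lemma isWord_replicate {q : ℕ} (hq : q ≠ 0) : IsWord m n (List.replicate q m) :=
  ⟨by simpa using hq, fun y hy => by simp [List.eq_of_mem_replicate hy]⟩

lemma IsWord.append {s s' : List ℕ} (hs : IsWord m n s) (hs' : IsWord m n s') :
    IsWord m n (s ++ s') :=
  ⟨List.append_ne_nil_of_left_ne_nil hs.1 s', List.append_subset.2 ⟨hs.2, hs'.2⟩⟩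

lemma expand1_length (x : ℕ) (s : List ℕ) : (expand1 m n x s).length = s.sum := by
  induction s generalizing x with
  | nil => rfl
  | cons a l ih => simp [expand1, ih]

lemma expand1_subset {x : ℕ} (hx : x ∈ [m, n]) (s : List ℕ) : expand1 m n x s ⊆ [m, n] := by
  induction s generalizing x with
  | nil => exact List.nil_subset _
  | cons a l ih =>
    exact List.append_subset.2
      ⟨fun y hy => List.eq_of_mem_replicate hy ▸ hx, ih (add_sub_mem_pair hx)⟩

lemma expand1_append {x : ℕ} (hx : x ≤ m + n) (s s' : List ℕ) :
    expand1 m n x (s ++ s') =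
      expand1 m n x s ++ expand1 m n (if Even s.length then x else m + n - x) s' := by
  induction s generalizing x with
  | nil => simp [expand1]
  | cons a l ih =>
    rw [List.cons_append, expand1, expand1, ih (Nat.sub_le _ _), Nat.sub_sub_self hx]
    by_cases h : Even l.length <;> simp [h, Nat.even_add_one]

lemma expand1_ne_nil (hm : 0 < m) (hn : 0 < n) {s : List ℕ} (hs : IsWord m n s) (x : ℕ) :
    expand1 m n x s ≠ [] := by
  obtain ⟨hs0, hsmn⟩ := hs
  obtain ⟨a, l, rfl⟩ := List.exists_cons_of_ne_nil hs0
  have ha : 0 < a := by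
    have := hsmn List.mem_cons_self
    simp only [List.mem_cons, List.not_mem_nil, or_false] at this
    omega
  simp [expand1, ha.ne']

lemma IsWord.expand1 (hm : 0 < m) (hn : 0 < n) {s : List ℕ} (hs : IsWord m n s) {x : ℕ}
    (hx : x ∈ [m, n]) : IsWord m n (expand1 m n x s) :=
  ⟨expand1_ne_nil hm hn hs x, expand1_subset hx s⟩

lemma IsWord.expand (hm : 0 < m) (hn : 0 < n) {s : List ℕ} (hs : IsWord m n s) {t : List ℕ}
    (ht : t ⊆ [m, n]) : IsWord m n (expand m n s t) := by
  induction t generalizing s with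
  | nil => exact hs
  | cons x t ih =>
    rw [List.cons_subset] at ht
    exact ih (hs.expand1 hm hn ht.1) ht.2

lemma getLastD_append_of_ne_nil {α : Type*} (l : List α) {l' : List α} (h : l' ≠ []) (d : α) :
    (l ++ l').getLastD d = l'.getLastD d := by
  simp [List.getLast?_eq_some_getLast h]

lemma add_sub_getLastD_expand1 (hm : 0 < m) (hn : 0 < n) {x : ℕ} (hx : x ≤ m + n) {s : List ℕ}
    (hs : IsWord m n s) :
    m + n - (expand1 m n x s).getLastD 0 = if Even s.length then x else m + n - x := by
  obtain ⟨hs0, hsmn⟩ := hs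
  induction s generalizing x with
  | nil => exact absurd rfl hs0
  | cons a l ih =>
    by_cases hl : l = []
    · subst hl
      have ha : 0 < a := by
        have := hsmn List.mem_cons_self
        simp only [List.mem_cons, List.not_mem_nil, or_false] at this
        omega
      simp [expand1, List.getLast?_replicate, ha.ne']
    · have hw : IsWord m n l := ⟨hl, (List.cons_subset.1 hsmn).2⟩
      have hlast := ih (Nat.sub_le (m + n) x) hl hw.2
      rw [Nat.sub_sub_self hx] at hlast
      rw [expand1, getLastD_append_of_ne_nil _ (expand1_ne_nil hm hn hw _), hlast]
      by_cases h : Even l.length <;> simp [h, Nat.even_add_one]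

lemma expand_append (s t t' : List ℕ) :
    expand m n s (t ++ t') = expand m n (expand m n s t) t' := by
  induction t generalizing s with
  | nil => rfl
  | cons x t ih => exact ih _

lemma length_expand_concat (s t : List ℕ) (x : ℕ) :
    (expand m n s (t ++ [x])).length = (expand m n s t).sum := by
  rw [expand_append]
  exact expand1_length _ _

lemma torsion_nil (s : List ℕ) : torsion m n s [] = [] := rfl

lemma torsion_cons (s : List ℕ) (x : ℕ) (t : List ℕ) :
    torsion m n s (x :: t) =
      (m + n - (expand1 m n x s).getLastD 0) :: torsion m n (expand1 m n x s) t := by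
  simp only [torsion, List.length_cons, List.range_succ_eq_map, List.map_cons, List.map_map]
  congr 1

lemma torsion_append (s t t' : List ℕ) :
    torsion m n s (t ++ t') = torsion m n s t ++ torsion m n (expand m n s t) t' := by
  induction t generalizing s with
  | nil => rfl
  | cons x t ih => rw [List.cons_append, torsion_cons, torsion_cons, ih]; rfl

lemma torsion_cons_of_isWord (hm : 0 < m) (hn : 0 < n) {s : List ℕ} (hs : IsWord m n s) {x : ℕ}
    (hx : x ≤ m + n) (t : List ℕ) :
    torsion m n s (x :: t) =
      (if Even s.length then x else m + n - x) :: torsion m n (expand1 m n x s) t := by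
  rw [torsion_cons, add_sub_getLastD_expand1 hm hn hx hs]

lemma torsion_subset (hm : 0 < m) (hn : 0 < n) {s : List ℕ} (hs : IsWord m n s) {t : List ℕ}
    (ht : t ⊆ [m, n]) : torsion m n s t ⊆ [m, n] := by
  induction t generalizing s with
  | nil => exact List.nil_subset _
  | cons x t ih =>
    obtain ⟨hx, ht⟩ := List.cons_subset.1 ht
    rw [torsion_cons_of_isWord hm hn hs (le_add_of_mem_pair hx)]
    refine List.cons_subset.2 ⟨?_, ih (hs.expand1 hm hn hx) ht⟩
    split_ifs
    exacts [hx, add_sub_mem_pair hx]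

lemma expand_append_left (hm : 0 < m) (hn : 0 < n) {s : List ℕ} (hs : IsWord m n s)
    (s' : List ℕ) {t : List ℕ} (ht : t ⊆ [m, n]) :
    expand m n (s ++ s') t = expand m n s t ++ expand m n s' (torsion m n s t) := by
  induction t generalizing s s' with
  | nil => rfl
  | cons x t ih =>
    obtain ⟨hx, ht⟩ := List.cons_subset.1 ht
    rw [torsion_cons_of_isWord hm hn hs (le_add_of_mem_pair hx)]
    simp only [expand]
    rw [expand1_append (le_add_of_mem_pair hx), ih (hs.expand1 hm hn hx) _ ht]

lemma torsion_append_left (hm : 0 < m) (hn : 0 < n) {s s' : List ℕ} (hs : IsWord m n s)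
    (hs' : IsWord m n s') {t : List ℕ} (ht : t ⊆ [m, n]) :
    torsion m n (s ++ s') t = torsion m n s' (torsion m n s t) := by
  induction t generalizing s s' with
  | nil => rfl
  | cons x t ih =>
    obtain ⟨hx, ht⟩ := List.cons_subset.1 ht
    have hy : (if Even s.length then x else m + n - x) ∈ [m, n] := by
      split_ifs
      exacts [hx, add_sub_mem_pair hx]
    rw [torsion_cons, torsion_cons_of_isWord hm hn hs (le_add_of_mem_pair hx), torsion_cons,
      expand1_append (le_add_of_mem_pair hx),
      getLastD_append_of_ne_nil _ (expand1_ne_nil hm hn hs' _),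
      ih (hs.expand1 hm hn hx) (hs'.expand1 hm hn hy) ht]

lemma iterate_torsion_singleton (hm : 0 < m) (hn : 0 < n) {q : ℕ} (hq : q ≠ 0) {t : List ℕ}
    (ht : t ⊆ [m, n]) : (torsion m n [m])^[q] t = torsion m n (List.replicate q m) t := by
  obtain ⟨q, rfl⟩ := Nat.exists_eq_succ_of_ne_zero hq
  clear hq
  induction q generalizing t with
  | zero => rfl
  | succ q ih =>
    have hm1 : IsWord m n [m] := isWord_replicate one_ne_zero
    rw [Function.iterate_succ_apply, ih (torsion_subset hm hn hm1 ht),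
      ← torsion_append_left hm hn hm1 (isWord_replicate q.succ_ne_zero) ht]
    rfl

lemma torsion_concat_eq_self_iff (hm : 0 < m) (hn : 0 < n) (hmn : m ≠ n) {s t : List ℕ}
    (hs : IsWord m n s) (ht : t ⊆ [m, n]) {x : ℕ} (hx : x ∈ [m, n])
    (hfix : torsion m n s t = t) :
    torsion m n s (t ++ [x]) = t ++ [x] ↔ Even (expand m n s t).length := by
  rw [torsion_append, hfix, torsion_cons_of_isWord hm hn (hs.expand hm hn ht)
    (le_add_of_mem_pair hx), torsion_nil, List.append_cancel_left_eq, List.cons.injEq,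
    and_iff_left rfl]
  split_ifs with h
  · simp [h]
  · simp only [h, iff_false]
    simp only [List.mem_cons, List.not_mem_nil, or_false] at hx
    omega

lemma torsion_append_self_concat (hm : 0 < m) (hn : 0 < n) (hmn : m ≠ n) {s t : List ℕ}
    (hs : IsWord m n s) (ht : t ⊆ [m, n]) {x : ℕ} (hx : x ∈ [m, n])
    (hfix : torsion m n s t = t) :
    torsion m n (s ++ s) (t ++ [x]) = t ++ [x] := by
  have hfix2 : torsion m n (s ++ s) t = t := by rw [torsion_append_left hm hn hs hs ht, hfix, hfix]
  rw [torsion_concat_eq_self_iff hm hn hmn (hs.append hs) ht hx hfix2,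
    expand_append_left hm hn hs s ht, hfix, List.length_append]
  exact ⟨_, rfl⟩

lemma torsion_append_self_concat_pair (hm : 0 < m) (hn : 0 < n) (hmn : m ≠ n) {s t : List ℕ}
    (hs : IsWord m n s) (ht : t ⊆ [m, n]) {x y : ℕ} (hx : x ∈ [m, n]) (hy : y ∈ [m, n])
    (hfix : torsion m n s t = t) :
    torsion m n (s ++ s) (t ++ [x, y]) = t ++ [x, y] := by
  have htx : t ++ [x] ⊆ [m, n] :=
    List.append_subset.2 ⟨ht, List.cons_subset.2 ⟨hx, List.nil_subset _⟩⟩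
  obtain ⟨z, hz⟩ : ∃ z, torsion m n s (t ++ [x]) = t ++ [z] :=
    ⟨_, by rw [torsion_append, hfix, torsion_cons, torsion_nil]⟩
  rw [show t ++ [x, y] = t ++ [x] ++ [y] by simp,
    torsion_concat_eq_self_iff hm hn hmn (hs.append hs) htx hy
      (torsion_append_self_concat hm hn hmn hs ht hx hfix),
    expand_append_left hm hn hs s htx, hz, List.length_append, length_expand_concat,
    length_expand_concat]
  exact ⟨_, rfl⟩

lemma replicate_subset_pair (k : ℕ) : List.replicate k m ⊆ [m, n] :=
  fun y hy => by simp [List.eq_of_mem_replicate hy]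

lemma torsion_replicate_pow_replicate (hm : 0 < m) (hn : 0 < n) (hmn : m ≠ n) (j : ℕ) :
    torsion m n (List.replicate (2 ^ j) m) (List.replicate (2 * j) m) =
      List.replicate (2 * j) m := by
  induction j with
  | zero => rfl
  | succ j ih =>
    have hm2 : m ∈ [m, n] := List.mem_cons_self
    rw [pow_succ, mul_two, List.replicate_add, mul_add, mul_one, List.replicate_add]
    exact torsion_append_self_concat_pair hm hn hmn (isWord_replicate (pow_ne_zero j two_ne_zero))
      (replicate_subset_pair _) hm2 hm2 ih

theorem minimalPeriod_torsion_replicate_eq_iff (hm : 0 < m) (hn : 0 < n) (hmn : m ≠ n) (j : ℕ) :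
    Function.minimalPeriod (torsion m n [m]) (List.replicate (2 * j + 1) m) = 2 ^ (j + 1) ↔
      Odd (expand m n (List.replicate (2 ^ j) m) (List.replicate (2 * j) m)).length := by
  have hs := isWord_replicate (m := m) (n := n) (pow_ne_zero j two_ne_zero)
  have ht := replicate_subset_pair (m := m) (n := n) (2 * j)
  have htm : List.replicate (2 * j + 1) m ⊆ [m, n] := replicate_subset_pair _
  have hfix := torsion_replicate_pow_replicate hm hn hmn j
  have hm2 : m ∈ [m, n] := List.mem_cons_self
  have hperiodic :
      Function.IsPeriodicPt (torsion m n [m]) (2 ^ (j + 1)) (List.replicate (2 * j + 1) m) := by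
    rw [Function.IsPeriodicPt, Function.IsFixedPt,
      iterate_torsion_singleton hm hn (pow_ne_zero _ two_ne_zero) htm, pow_succ, mul_two,
      List.replicate_add, List.replicate_succ']
    exact torsion_append_self_concat hm hn hmn hs ht hm2 hfix
  have hhalf : Function.IsPeriodicPt (torsion m n [m]) (2 ^ j) (List.replicate (2 * j + 1) m) ↔
      Even (expand m n (List.replicate (2 ^ j) m) (List.replicate (2 * j) m)).length := by
    rw [Function.IsPeriodicPt, Function.IsFixedPt,
      iterate_torsion_singleton hm hn (pow_ne_zero _ two_ne_zero) htm, List.replicate_succ']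
    exact torsion_concat_eq_self_iff hm hn hmn hs ht hm2 hfix
  rw [← Nat.not_even_iff_odd, ← hhalf]
  refine ⟨fun h hhalf => ?_, fun h => Function.minimalPeriod_eq_prime_pow h hperiodic⟩
  have := hhalf.minimalPeriod_le (Nat.two_pow_pos j)
  rw [h, pow_succ] at this
  have := Nat.two_pow_pos j
  omega

end

/-- For even `n > 0`: every orbit of `1^{2j-1}` under `t ↦ C_{1,n}(1, t)` has length
`2^j` (for all `j > 0`) iff `E_{1,n}(1^{2^j}, 1^{2j})` has odd length (for all `j > 0`). -/
theorem orbit_conjecture_iff_odd_length (n : ℕ) (hn : 0 < n) (hne : Even n) :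
    (∀ j : ℕ, 0 < j →
      Function.minimalPeriod (torsion 1 n [1]) (List.replicate (2 * j - 1) 1) = 2 ^ j) ↔
    (∀ j : ℕ, 0 < j →
      Odd (expand 1 n (List.replicate (2 ^ j) 1) (List.replicate (2 * j) 1)).length) := by
  have hn1 : 1 ≠ n := by
    rintro rfl
    exact Nat.not_even_one hne
  have key := minimalPeriod_torsion_replicate_eq_iff one_pos hn hn1
  refine ⟨fun h j _ => (key j).1 (h (j + 1) j.succ_pos), fun h j hj => ?_⟩
  obtain ⟨i, rfl⟩ := Nat.exists_eq_add_one_of_ne_zero hj.ne'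
  rw [show 2 * (i + 1) - 1 = 2 * i + 1 by omega, key]
  cases i with
  | zero => exact odd_one
  | succ i => exact h (i + 1) i.succ_pos
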